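/- arXiv:1705.01805 — 8 statements merged into one kernel-verified Lean document; each statement's English description precedes it below -/
import Mathlib

section
/- For every positive integer k, the set A_k = {n ≥ 1 : gcd(n, F_n) = k} is nonempty if and only if k = gcd(ℓ(k), F_{ℓ(k)}). -/
open scoped BigOperators

/-- `fibZ m` is the rank of appearance of `m`: the least positive `n` with `m ∣ F_n`. -/
noncomputable def fibZ (m : ℕ) : ℕ := sInf {n : ℕ | 0 < n ∧ m ∣ Nat.fib n}

/-- `fibL m = lcm(m, z(m))`. -/
noncomputable def fibL (m : ℕ) : ℕ := Nat.lcm m (fibZ m)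

/-- `countIn S x` is the number of elements of `S` in `[1, x]`. -/
noncomputable def countIn (S : Set ℕ) (x : ℝ) : ℕ :=
  (S ∩ {n : ℕ | 1 ≤ n ∧ (n : ℝ) ≤ x}).ncard

/-- `S` has asymptotic density `a`. -/
def HasDensity (S : Set ℕ) (a : ℝ) : Prop :=
  Filter.Tendsto (fun x : ℝ => (countIn S x : ℝ) / x) Filter.atTop (nhds a)

/-- `fibA k` is the set of positive integers `n` with `gcd(n, F_n) = k`. -/
def fibA (k : ℕ) : Set ℕ := {n : ℕ | 0 < n ∧ Nat.gcd n (Nat.fib n) = k}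

lemma exists_pos_fib_dvd (m : ℕ) (hm : 0 < m) : ∃ n, 0 < n ∧ m ∣ Nat.fib n := by
  haveI : NeZero m := ⟨hm.ne'⟩
  set g : ZMod m × ZMod m → ZMod m × ZMod m := fun p => (p.2, p.1 + p.2) with hg
  have hginj : Function.Injective g := by
    intro p q h
    simp only [hg, Prod.mk.injEq] at h
    obtain ⟨h1, h2⟩ := h
    rw [h1] at h2
    exact Prod.ext (add_right_cancel h2) h1
  set f : ℕ → ZMod m × ZMod m := fun n => ((Nat.fib n : ZMod m), (Nat.fib (n+1) : ZMod m))
    with hf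
  have hiter : ∀ n, f n = g^[n] (f 0) := by
    intro n
    induction n with
    | zero => simp
    | succ n ih =>
      rw [Function.iterate_succ_apply', ← ih]
      simp [hf, hg, Nat.fib_add_two, Nat.cast_add]
  obtain ⟨a, b, hab, heq⟩ := Finite.exists_ne_map_eq_of_infinite f
  wlog hlt : a < b generalizing a b
  · exact this b a hab.symm heq.symm (hab.lt_or_gt.resolve_left hlt)
  refine ⟨b - a, Nat.sub_pos_of_lt hlt, ?_⟩
  have key : g^[a] (f 0) = g^[a] (g^[b - a] (f 0)) := by
    rw [← Function.iterate_add_apply, Nat.add_sub_cancel' hlt.le, ← hiter, ← hiter]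
    exact heq
  have h0 : f 0 = f (b - a) := by
    rw [hiter (b - a)]
    exact hginj.iterate a key
  have : ((Nat.fib (b - a) : ZMod m)) = 0 := by
    have := congrArg Prod.fst h0
    simpa [hf] using this.symm
  exact (ZMod.natCast_eq_zero_iff _ _).mp this

lemma fibZ_mem (m : ℕ) (hm : 0 < m) : 0 < fibZ m ∧ m ∣ Nat.fib (fibZ m) :=
  Nat.sInf_mem (exists_pos_fib_dvd m hm)

lemma fibZ_dvd_of_dvd_fib {m n : ℕ} (hm : 0 < m) (h : m ∣ Nat.fib n) : fibZ m ∣ n := by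
  rcases Nat.eq_zero_or_pos n with rfl | hn
  · exact dvd_zero _
  obtain ⟨hz, hzd⟩ := fibZ_mem m hm
  have hgcd : m ∣ Nat.fib (Nat.gcd (fibZ m) n) := by
    rw [Nat.fib_gcd]
    exact Nat.dvd_gcd hzd h
  have hle : fibZ m ≤ Nat.gcd (fibZ m) n :=
    Nat.sInf_le ⟨Nat.gcd_pos_of_pos_right _ hn, hgcd⟩
  have hge : Nat.gcd (fibZ m) n ≤ fibZ m := Nat.le_of_dvd hz (Nat.gcd_dvd_left _ _)
  have : Nat.gcd (fibZ m) n = fibZ m := le_antisymm hge hle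
  rw [← this]
  exact Nat.gcd_dvd_right _ _

lemma dvd_fib_of_fibZ_dvd {m n : ℕ} (hm : 0 < m) (h : fibZ m ∣ n) : m ∣ Nat.fib n :=
  (fibZ_mem m hm).2.trans (Nat.fib_dvd _ _ h)

theorem fibA_nonempty_iff (k : ℕ) (hk : 0 < k) :
    (fibA k).Nonempty ↔ k = Nat.gcd (fibL k) (Nat.fib (fibL k)) := by
  obtain ⟨hz, hzd⟩ := fibZ_mem k hk
  have hLpos : 0 < fibL k := Nat.pos_of_ne_zero (by
    simp [fibL, Nat.lcm_ne_zero hk.ne' hz.ne'])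
  have hkL : k ∣ fibL k := Nat.dvd_lcm_left _ _
  have hzL : fibZ k ∣ fibL k := Nat.dvd_lcm_right _ _
  have hkFL : k ∣ Nat.fib (fibL k) := dvd_fib_of_fibZ_dvd hk hzL
  constructor
  · rintro ⟨n, hn, hgcd⟩
    have hkn : k ∣ n := hgcd ▸ Nat.gcd_dvd_left _ _
    have hkFn : k ∣ Nat.fib n := hgcd ▸ Nat.gcd_dvd_right _ _
    have hzn : fibZ k ∣ n := fibZ_dvd_of_dvd_fib hk hkFn
    have hLn : fibL k ∣ n := Nat.lcm_dvd hkn hzn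
    have h1 : k ∣ Nat.gcd (fibL k) (Nat.fib (fibL k)) := Nat.dvd_gcd hkL hkFL
    have h2 : Nat.gcd (fibL k) (Nat.fib (fibL k)) ∣ Nat.gcd n (Nat.fib n) :=
      Nat.dvd_gcd ((Nat.gcd_dvd_left _ _).trans hLn)
        ((Nat.gcd_dvd_right _ _).trans (Nat.fib_dvd _ _ hLn))
    rw [hgcd] at h2
    exact Nat.dvd_antisymm h1 h2
  · intro h
    exact ⟨fibL k, hLpos, h.symm⟩
end

section
/- Let S be a set of positive integers such that the sum over s ∈ S of 1/s converges. Then the set of nonmultiples N(S) = {n ≥ 1 : s ∤ n for all s ∈ S} has an asymptotic density. -/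
open scoped BigOperators

/-!
Let `G` be a finite set of positive elements of `S`. The non-multiples of `G` form a
periodic set (period `∏ G`), so their counting function is `a x + O(1)` for an explicit `a`.
Every non-multiple of `G` that is not in `N(S)` is a multiple of some `s ∈ S \ G`, and there are
at most `x ∑_{s ∈ S \ G} 1/s` of those up to `x`. Since `∑ 1/s` converges, this tail is `≤ ε` for
`G` large, so `#(N(S) ∩ [1, x]) / x` oscillates by at most `O(ε)` eventually for every `ε`,
and therefore converges.
-/

open Finset Filter Topology

theorem exists_tendsto_of_forall_eventually_dist_le {α β : Type*} [PseudoMetricSpace β]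
    [CompleteSpace β] {l : Filter α} [l.NeBot] {f : α → β}
    (h : ∀ ε > 0, ∃ b, ∀ᶠ x in l, dist (f x) b ≤ ε) : ∃ b, Tendsto f l (𝓝 b) := by
  refine cauchy_map_iff_exists_tendsto.mp
    (Metric.cauchy_iff.mpr ⟨inferInstance, fun ε hε => ?_⟩)
  obtain ⟨b, hb⟩ := h (ε / 3) (by positivity)
  refine ⟨Metric.closedBall b (ε / 3), hb, fun y hy z hz => ?_⟩
  calc dist y z ≤ dist y b + dist z b := dist_triangle_right y z b
    _ ≤ ε / 3 + ε / 3 := add_le_add hy hz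
    _ < ε := by linarith

namespace Nat

variable {p : ℕ → Prop} [DecidablePred p] {L : ℕ}

theorem count_add_mul_of_periodic (hp : Function.Periodic p L) (j n : ℕ) :
    count p (j * L + n) = j * count p L + count p n := by
  induction j with
  | zero => simp
  | succ j ih =>
    have hshift : count (fun k => p (L + k)) (j * L + n) = count p (j * L + n) := by
      simp only [add_comm L]
      congr 1
      exact funext hp
    rw [show (j + 1) * L + n = L + (j * L + n) by ring, count_add, hshift, ih]
    ring

theorem abs_count_sub_le_of_periodic (hp : Function.Periodic p L) (hL : 0 < L) (m : ℕ) :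
    |(count p m : ℝ) - count p L / L * m| ≤ L := by
  obtain ⟨j, r, hr, rfl⟩ : ∃ j r, r < L ∧ m = j * L + r :=
    ⟨m / L, m % L, mod_lt m hL, (div_add_mod' m L).symm⟩
  have hcL : (count p L : ℝ) ≤ L := by exact_mod_cast count_le p
  have hcr : (count p r : ℝ) ≤ r := by exact_mod_cast count_le p
  have hrL : (r : ℝ) ≤ L := by exact_mod_cast hr.le
  have hsplit : (count p (j * L + r) : ℝ) - count p L / L * ↑(j * L + r)
      = count p r - count p L * r / L := by
    rw [count_add_mul_of_periodic hp]
    push_cast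
    field_simp
    ring
  rw [hsplit]
  refine abs_sub_le_of_nonneg_of_le (by positivity) (hcr.trans hrL) (by positivity) ?_
  rw [div_le_iff₀ (by exact_mod_cast hL)]
  nlinarith

end Nat

theorem countIn_eq_card (T : Set ℕ) [DecidablePred (· ∈ T)] {x : ℝ} (hx : 0 ≤ x) :
    countIn T x = #{n ∈ Ioc 0 ⌊x⌋₊ | n ∈ T} := by
  rw [countIn, ← Set.ncard_coe_finset]
  congr 1
  ext n
  simp only [Set.mem_inter_iff, Set.mem_ofPred_eq, coe_filter, mem_Ioc, Nat.le_floor_iff hx,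
    Nat.one_le_iff_ne_zero, Nat.pos_iff_ne_zero]
  tauto

-- `countIn` only sees `n ≥ 1`, whereas `Nat.count` counts from `0`; hence the shift.
theorem countIn_eq_count (T : Set ℕ) [DecidablePred (· ∈ T)] {x : ℝ} (hx : 0 ≤ x) :
    countIn T x = Nat.count (fun n => n + 1 ∈ T) ⌊x⌋₊ := by
  rw [countIn_eq_card T hx, Nat.count_eq_card_filter_range, range_eq_Ico,
    ← Ico_add_one_add_one_eq_Ioc, ← map_add_right_Ico, filter_map, card_map]
  rfl

theorem countIn_mono {A B : Set ℕ} (h : A ⊆ B) (x : ℝ) : countIn A x ≤ countIn B x :=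
  Set.ncard_le_ncard (Set.inter_subset_inter_left _ h)
    ((Set.finite_Iic ⌊x⌋₊).subset fun _ hn => Nat.le_floor hn.2.2)

theorem exists_abs_countIn_sub_le_of_periodic (T : Set ℕ) {L : ℕ} (hL : 0 < L)
    (hT : Function.Periodic (fun n => n + 1 ∈ T) L) :
    ∃ a : ℝ, ∀ x : ℝ, 0 ≤ x → |(countIn T x : ℝ) - a * x| ≤ L + 1 := by
  classical
  set c := Nat.count (fun n => n + 1 ∈ T) L
  refine ⟨c / L, fun x hx => ?_⟩
  have hfloor : |(⌊x⌋₊ : ℝ) - x| ≤ 1 := by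
    rw [abs_sub_comm, abs_of_nonneg (by linarith [Nat.floor_le hx])]
    linarith [Nat.lt_floor_add_one x]
  have ha : |(c / L : ℝ)| ≤ 1 := by
    rw [abs_of_nonneg (by positivity), div_le_one (by exact_mod_cast hL)]
    exact_mod_cast Nat.count_le _
  rw [countIn_eq_count T hx]
  calc |(Nat.count (fun n => n + 1 ∈ T) ⌊x⌋₊ : ℝ) - c / L * x|
      ≤ |(Nat.count (fun n => n + 1 ∈ T) ⌊x⌋₊ : ℝ) - c / L * ⌊x⌋₊|
        + |(c / L : ℝ)| * |(⌊x⌋₊ : ℝ) - x| := by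
        rw [← abs_mul, mul_sub]
        exact abs_sub_le _ _ _
    _ ≤ L + 1 * 1 := by
        gcongr
        exact Nat.abs_count_sub_le_of_periodic hT hL _
    _ = L + 1 := by ring

theorem exists_hasDensity_of_forall_approx (A : Set ℕ)
    (h : ∀ ε > 0, ∃ a : ℝ, ∀ᶠ x in atTop, |(countIn A x : ℝ) - a * x| ≤ ε * x) :
    ∃ a, HasDensity A a := by
  refine exists_tendsto_of_forall_eventually_dist_le fun ε hε => ?_
  obtain ⟨a, ha⟩ := h ε hε
  refine ⟨a, ?_⟩
  filter_upwards [ha, eventually_gt_atTop 0] with x hax hx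
  have hdiv : (countIn A x : ℝ) / x - a = ((countIn A x : ℝ) - a * x) / x := by field_simp
  rwa [Real.dist_eq, hdiv, abs_div, abs_of_pos hx, div_le_iff₀ hx]

theorem countIn_le_countIn_add_sum_div (A T : Set ℕ) (t : Finset ℕ) {x : ℝ} (hx : 0 ≤ x)
    (hcover : ∀ n ∈ T, n ∉ A → 1 ≤ n → (n : ℝ) ≤ x → ∃ s ∈ t, s ∣ n) :
    (countIn T x : ℝ) ≤ countIn A x + x * ∑ s ∈ t, 1 / (s : ℝ) := by
  classical
  rw [countIn_eq_card T hx, countIn_eq_card A hx, mul_sum]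
  set I := Ioc 0 ⌊x⌋₊
  have hsub : {n ∈ I | n ∈ T} ⊆ {n ∈ I | n ∈ A} ∪ t.biUnion fun s => {n ∈ I | s ∣ n} := by
    intro n hn
    simp only [mem_filter, mem_union, mem_biUnion, I, mem_Ioc] at hn ⊢
    by_cases hA : n ∈ A
    · exact Or.inl ⟨hn.1, hA⟩
    · obtain ⟨s, hs, hsn⟩ := hcover n hn.2 hA hn.1.1 ((Nat.le_floor_iff hx).mp hn.1.2)
      exact Or.inr ⟨s, hs, hn.1, hsn⟩
  have hcard : #{n ∈ I | n ∈ T} ≤ #{n ∈ I | n ∈ A} + ∑ s ∈ t, #{n ∈ I | s ∣ n} :=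
    calc #{n ∈ I | n ∈ T} ≤ #({n ∈ I | n ∈ A} ∪ t.biUnion fun s => {n ∈ I | s ∣ n}) :=
          card_le_card hsub
      _ ≤ #{n ∈ I | n ∈ A} + #(t.biUnion fun s => {n ∈ I | s ∣ n}) := card_union_le _ _
      _ ≤ _ := by gcongr; exact card_biUnion_le
  have hmultiples : ∀ s ∈ t, (#{n ∈ I | s ∣ n} : ℝ) ≤ x * (1 / s) := fun s _ => by
    rw [Nat.Ioc_filter_dvd_card_eq_div, mul_one_div]
    exact Nat.cast_div_le.trans (by gcongr; exact Nat.floor_le hx)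
  calc (#{n ∈ I | n ∈ T} : ℝ) ≤ #{n ∈ I | n ∈ A} + ∑ s ∈ t, (#{n ∈ I | s ∣ n} : ℝ) := by
        exact_mod_cast hcard
    _ ≤ _ := by gcongr with s hs; exact hmultiples s hs

def nonmultiples (S : Set ℕ) : Set ℕ := {n | 0 < n ∧ ∀ s ∈ S, ¬ s ∣ n}

theorem nonmultiples_anti {S S' : Set ℕ} (h : S' ⊆ S) : nonmultiples S ⊆ nonmultiples S' :=
  fun _ hn => ⟨hn.1, fun s hs => hn.2 s (h hs)⟩

theorem periodic_succ_mem_nonmultiples (F : Finset ℕ) :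
    Function.Periodic (fun n => n + 1 ∈ nonmultiples F) (∏ s ∈ F, s) := by
  intro n
  have hdvd : ∀ s ∈ F, s ∣ n + ∏ s ∈ F, s + 1 ↔ s ∣ n + 1 := fun s hs => by
    rw [add_right_comm]
    exact Nat.dvd_add_left (dvd_prod_of_mem _ hs)
  simp only [nonmultiples, Set.mem_ofPred_eq, Nat.succ_pos, true_and]
  exact propext (forall₂_congr fun s hs => not_congr (hdvd s hs))

open scoped Classical in
theorem countIn_nonmultiples_le (S : Set ℕ) (F : Finset ℕ) {δ : ℝ}
    (hF : ∀ t : Finset ℕ, Disjoint t F → ∑ s ∈ t, S.indicator (fun s => 1 / (s : ℝ)) s < δ)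
    {x : ℝ} (hx : 0 ≤ x) :
    (countIn (nonmultiples ↑{s ∈ F | 0 < s ∧ s ∈ S}) x : ℝ)
      ≤ countIn (nonmultiples S) x + δ * x := by
  set t := {s ∈ Icc 1 ⌊x⌋₊ | s ∈ S ∧ s ∉ F}
  refine (countIn_le_countIn_add_sum_div (nonmultiples S) _ t hx
    fun n hn hnS hn1 hnx => ?_).trans ?_
  · simp only [nonmultiples, Set.mem_ofPred_eq, not_and, not_forall, not_not] at hnS
    obtain ⟨s, hs, hsn⟩ := hnS hn1
    have hs0 : 0 < s := Nat.pos_of_dvd_of_pos hsn hn1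
    refine ⟨s, mem_filter.mpr ⟨mem_Icc.mpr ⟨hs0, ?_⟩, hs, fun hsF => ?_⟩, hsn⟩
    · exact (Nat.le_of_dvd hn1 hsn).trans (Nat.le_floor hnx)
    · exact hn.2 s (by simp [hsF, hs0, hs]) hsn
  · have hsum : ∑ s ∈ t, 1 / (s : ℝ) < δ := by
      refine lt_of_eq_of_lt (sum_congr rfl fun s hs => ?_)
        (hF t (disjoint_left.mpr fun s hs => (mem_filter.mp hs).2.2))
      rw [Set.indicator_of_mem (mem_filter.mp hs).2.1]
    rw [mul_comm δ]
    gcongr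

theorem nonmultiples_density_exists_general (S : Set ℕ)
    (h : Summable (fun s : S => (1 : ℝ) / (s : ℝ))) :
    ∃ a : ℝ, HasDensity {n : ℕ | 0 < n ∧ ∀ s ∈ S, ¬ s ∣ n} a := by
  classical
  refine exists_hasDensity_of_forall_approx (nonmultiples S) fun ε hε => ?_
  have hg : Summable (S.indicator fun s => 1 / (s : ℝ)) := summable_subtype_iff_indicator.mp h
  obtain ⟨F, hF⟩ := hg.vanishing (Iio_mem_nhds (half_pos hε))
  let G : Finset ℕ := {s ∈ F | 0 < s ∧ s ∈ S}
  obtain ⟨a, ha⟩ := exists_abs_countIn_sub_le_of_periodic (nonmultiples G)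
    (prod_pos fun s hs => (mem_filter.mp hs).2.1) (periodic_succ_mem_nonmultiples G)
  refine ⟨a, ?_⟩
  filter_upwards [eventually_ge_atTop (2 * ((∏ s ∈ G, s : ℕ) + 1) / ε), eventually_ge_atTop 0]
    with x hxL hx
  have hL : ((∏ s ∈ G, s : ℕ) : ℝ) + 1 ≤ ε / 2 * x := by
    rw [div_le_iff₀ hε] at hxL
    linarith
  have hsub : (countIn (nonmultiples S) x : ℝ) ≤ countIn (nonmultiples G) x := by
    have hGS : (G : Set ℕ) ⊆ S := fun s hs => (mem_filter.mp (mem_coe.mp hs)).2.2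
    exact_mod_cast countIn_mono (nonmultiples_anti hGS) x
  have htail := countIn_nonmultiples_le S F hF hx
  have hperiodic := ha x hx
  rw [abs_le] at hperiodic ⊢
  constructor <;> linarith

theorem nonmultiples_density_exists (S : Set ℕ) (hS : ∀ s ∈ S, 0 < s)
    (h : Summable (fun s : S => (1 : ℝ) / (s : ℝ))) :
    ∃ a : ℝ, HasDensity {n : ℕ | 0 < n ∧ ∀ s ∈ S, ¬ s ∣ n} a :=
  nonmultiples_density_exists_general S h
end

section
/- Let S be a set of positive integers with 1 ∉ S and such that the sum over s ∈ S of 1/s converges. Then the set of nonmultiples N(S) = {n ≥ 1 : s ∤ n for all s ∈ S} has positive asymptotic density; in particular, its density satisfies d(N(S)) ≥ ∏_{s ∈ S} (1 − 1/s). -/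
open scoped BigOperators

/-!
For finite `F ⊆ S` the nonmultiples of `F` are periodic modulo `∏ F`, so their counting ratio
tends to their proportion `δ F` in one period. The Heilbronn–Rohrbach inequality
`∏_{s ∈ F} (1 - 1/s) ≤ δ F` follows by induction on `F`: within a period `s * ∏ F`, a multiple
`s * k` avoids `F` only if `k` does, so discarding the multiples of `s` costs at most a `1/s`
fraction. The nonmultiples of `S` lie among those of `F`, and the difference consists of multiples
of elements of `S \ F`; below `N` there are at most `N ∑_{s ∈ S \ F} 1/s` of them, which is
`≤ ε N` once `F` is large. Hence the counting ratio of `N(S)` converges to `inf_F δ F`, which is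
at least `∏_{s ∈ S} (1 - 1/s) > 0`.
-/

open Filter Topology Finset Function

theorem tendsto_div_of_abs_sub_mul_le {f : ℕ → ℝ} {a C : ℝ} (h : ∀ N, |f N - a * N| ≤ C) :
    Tendsto (fun N : ℕ => f N / N) atTop (𝓝 a) := by
  rw [← tendsto_sub_nhds_zero_iff]
  refine squeeze_zero_norm' ?_ (tendsto_const_div_atTop_nhds_zero_nat C)
  filter_upwards [eventually_gt_atTop 0] with N hN
  have hN : (0 : ℝ) < N := Nat.cast_pos.mpr hN
  rw [Real.norm_eq_abs, div_sub' hN.ne', abs_div, abs_of_pos hN, mul_comm]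
  exact div_le_div_of_nonneg_right (h N) hN.le

namespace Nat

variable {p : ℕ → Prop} [DecidablePred p] {a L : ℕ}

theorem count_mul_of_periodic (hp : Periodic p L) (q : ℕ) :
    count p (q * L) = q * count p L := by
  induction q with
  | zero => simp
  | succ q ih =>
    rw [add_mul, one_mul, count_add, ih, add_mul, one_mul]
    congr 2
    exact funext fun k => by rw [add_comm]; exact (hp.nat_mul q) k

theorem count_eq_div_mul_add_count_mod_of_periodic (hp : Periodic p L) (N : ℕ) :
    count p N = N / L * count p L + count p (N % L) := by
  conv_lhs => rw [← Nat.div_add_mod' N L]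
  rw [count_add, count_mul_of_periodic hp]
  congr 2
  exact funext fun k => by rw [add_comm]; exact (hp.nat_mul _) k

theorem count_mul_eq_count_not_dvd_add {q : ℕ → Prop} [DecidablePred q]
    (hq : ∀ n, q n ↔ p n ∧ ¬ a ∣ n) (ha : 0 < a) (M : ℕ) :
    count p (a * M) = count q (a * M) + count (fun k => p (a * k)) M := by
  have hmul : #{n ∈ range (a * M) | p n ∧ a ∣ n} = #{k ∈ range M | p (a * k)} := by
    refine card_nbij' (· / a) (a * ·) ?_ ?_ ?_ ?_
    · intro n hn
      simp only [coe_filter, mem_range] at hn ⊢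
      obtain ⟨hn, hpn, k, rfl⟩ := hn
      rw [Nat.mul_div_cancel_left k ha]
      exact ⟨(Nat.mul_lt_mul_left ha).mp hn, hpn⟩
    · intro k hk
      simp only [coe_filter, mem_range] at hk ⊢
      exact ⟨(Nat.mul_lt_mul_left ha).mpr hk.1, hk.2, dvd_mul_right a k⟩
    · intro n hn
      simp only [coe_filter, mem_range] at hn
      exact Nat.mul_div_cancel' hn.2.2
    · intro k _
      exact Nat.mul_div_cancel_left k ha
  simp only [count_eq_card_filter_range, ← hmul, filter_congr fun n _ => hq n, ← filter_filter]
  rw [add_comm, card_filter_add_card_filter_not]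

theorem tendsto_count_div_of_periodic (hp : Periodic p L) (hL : 0 < L) :
    Tendsto (fun N : ℕ => (count p N : ℝ) / N) atTop (𝓝 (count p L / L)) := by
  refine tendsto_div_of_abs_sub_mul_le (C := L) fun N => ?_
  have hL' : (0 : ℝ) < L := cast_pos.mpr hL
  have hN : (N : ℝ) = ((N / L : ℕ) : ℝ) * L + ((N % L : ℕ) : ℝ) := by
    exact_mod_cast (div_add_mod' N L).symm
  have hr : ((N % L : ℕ) : ℝ) ≤ L := by exact_mod_cast (mod_lt N hL).le
  have hc : (count p L : ℝ) ≤ L := by exact_mod_cast count_le p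
  have hcr : (count p (N % L) : ℝ) ≤ (N % L : ℕ) := by exact_mod_cast count_le p
  rw [count_eq_div_mul_add_count_mod_of_periodic hp N, hN]
  push_cast
  have : (count p L : ℝ) / L * ((N / L : ℕ) * L + (N % L : ℕ))
      = (N / L : ℕ) * count p L + count p L / L * (N % L : ℕ) := by field_simp
  rw [this, add_sub_add_left_eq_sub]
  refine abs_sub_le_of_nonneg_of_le (by positivity) (hcr.trans hr) (by positivity) ?_
  calc (count p L : ℝ) / L * (N % L : ℕ) ≤ 1 * (N % L : ℕ) := by
        gcongr; exact div_le_one_of_le₀ hc hL'.le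
    _ ≤ L := by rw [one_mul]; exact hr

end Nat

section Nonmultiples

variable {ι : Type*} (m : ι → ℕ)

def IsNonmultiple (F : Finset ι) (n : ℕ) : Prop := ∀ i ∈ F, ¬ m i ∣ n

instance (F : Finset ι) : DecidablePred (IsNonmultiple m F) :=
  fun _ => inferInstanceAs (Decidable (∀ i ∈ F, _))

variable {m}

theorem isNonmultiple_periodic (F : Finset ι) : Periodic (IsNonmultiple m F) (∏ i ∈ F, m i) :=
  fun _ => propext <| forall₂_congr fun _ hi =>
    not_congr (Nat.dvd_add_left (dvd_prod_of_mem m hi))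

theorem isNonmultiple_insert [DecidableEq ι] (i : ι) (F : Finset ι) (n : ℕ) :
    IsNonmultiple m (insert i F) n ↔ IsNonmultiple m F n ∧ ¬ m i ∣ n :=
  (forall_mem_insert _ _ _).trans and_comm

theorem IsNonmultiple.of_mul {F : Finset ι} {a n : ℕ} (h : IsNonmultiple m F (a * n)) :
    IsNonmultiple m F n :=
  fun i hi hdvd => h i hi (hdvd.mul_left a)

/-- Heilbronn–Rohrbach inequality. -/
theorem prod_one_sub_le_count_isNonmultiple (F : Finset ι) (hm : ∀ i ∈ F, 0 < m i) :
    ∏ i ∈ F, (1 - 1 / (m i : ℝ)) ≤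
      Nat.count (IsNonmultiple m F) (∏ i ∈ F, m i) / (∏ i ∈ F, m i : ℕ) := by
  classical
  induction F using Finset.induction_on with
  | empty => simp [Nat.count_one, IsNonmultiple]
  | @insert i F hi ih =>
    rw [forall_mem_insert] at hm
    set L := ∏ j ∈ F, m j
    set c := Nat.count (IsNonmultiple m F) L
    have hL : (0 : ℝ) < L := by exact_mod_cast prod_pos hm.2
    have hmi : (0 : ℝ) < m i := by exact_mod_cast hm.1
    have hcount : (m i - 1 : ℝ) * c ≤ Nat.count (IsNonmultiple m (insert i F)) (m i * L) := by
      have h := Nat.count_mul_eq_count_not_dvd_add (isNonmultiple_insert i F) hm.1 L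
      rw [Nat.count_mul_of_periodic (isNonmultiple_periodic F)] at h
      have h' : (m i : ℝ) * c = Nat.count (IsNonmultiple m (insert i F)) (m i * L)
          + Nat.count (fun k => IsNonmultiple m F (m i * k)) L := by exact_mod_cast h
      have hle : (Nat.count (fun k => IsNonmultiple m F (m i * k)) L : ℝ) ≤ c := by
        exact_mod_cast Nat.count_mono_left fun _ _ => IsNonmultiple.of_mul
      linarith
    rw [prod_insert hi, prod_insert hi, Nat.cast_mul]
    calc (1 - 1 / (m i : ℝ)) * ∏ j ∈ F, (1 - 1 / (m j : ℝ))
        ≤ (1 - 1 / (m i : ℝ)) * (c / L) := by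
          gcongr
          · exact sub_nonneg.2 (div_le_one_of_le₀ (by exact_mod_cast hm.1) hmi.le)
          · exact ih hm.2
      _ = (m i - 1 : ℝ) * c / (m i * L) := by field_simp
      _ ≤ _ := by gcongr

end Nonmultiples

section Summable

variable {ι : Type*} {f : ι → ℝ}

theorem Real.summable_log_one_sub_of_summable (hf : Summable f) :
    Summable fun i => Real.log (1 - f i) := by
  simpa only [sub_eq_add_neg] using Real.summable_log_one_add_of_summable hf.neg

theorem Real.tprod_one_sub_pos (hf : Summable f) (hf1 : ∀ i, f i < 1) :
    0 < ∏' i, (1 - f i) := by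
  rw [← Real.rexp_tsum_eq_tprod (fun i => sub_pos.2 (hf1 i))
    (Real.summable_log_one_sub_of_summable hf)]
  exact Real.exp_pos _

theorem Real.tprod_one_sub_le_prod (hf : Summable f) (hf0 : ∀ i, 0 ≤ f i) (hf1 : ∀ i, f i < 1)
    (F : Finset ι) : ∏' i, (1 - f i) ≤ ∏ i ∈ F, (1 - f i) := by
  have hpos : ∀ i, 0 < 1 - f i := fun i => sub_pos.2 (hf1 i)
  have hlog := Real.summable_log_one_sub_of_summable hf
  have hneg : ∑ i ∈ F, -Real.log (1 - f i) ≤ ∑' i, -Real.log (1 - f i) :=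
    sum_le_hasSum F (fun i _ => neg_nonneg.2 (Real.log_nonpos (hpos i).le (by linarith [hf0 i])))
      hlog.neg.hasSum
  rw [← Real.rexp_tsum_eq_tprod hpos hlog, ← Real.exp_log (prod_pos fun i _ => hpos i),
    Real.log_prod fun i _ => (hpos i).ne']
  rw [tsum_neg, sum_neg_distrib] at hneg
  exact Real.exp_le_exp.2 (neg_le_neg_iff.1 hneg)

end Summable

open scoped Classical in
/-- The `+ 1` accounts for `n = 0`, which `Nat.count` includes. -/
theorem count_isNonmultiple_le {S : Set ℕ} (F : Finset S) (N : ℕ) :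
    Nat.count (IsNonmultiple (↑) F) N ≤ Nat.count (fun n => 0 < n ∧ ∀ s ∈ S, ¬ s ∣ n) N + 1 +
      ∑ s ∈ (range N).subtype (· ∈ S) \ F, N / (s : ℕ) := by
  set t := (range N).subtype (· ∈ S) \ F
  simp only [Nat.count_eq_card_filter_range]
  have hsub : {n ∈ range N | IsNonmultiple (↑) F n} ⊆ {n ∈ range N | 0 < n ∧ ∀ s ∈ S, ¬ s ∣ n} ∪
      {0} ∪ t.biUnion fun s => {n ∈ Ioc 0 N | (s : ℕ) ∣ n} := by
    intro n hn
    simp only [mem_filter, mem_range] at hn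
    by_cases hn0 : n = 0
    · simp [hn0]
    by_cases hP : ∀ s ∈ S, ¬ s ∣ n
    · exact mem_union_left _ (mem_union_left _ (mem_filter.2 ⟨mem_range.2 hn.1,
        Nat.pos_of_ne_zero hn0, hP⟩))
    obtain ⟨s, hs, hsn⟩ : ∃ s ∈ S, s ∣ n := by simpa using hP
    have hsF : (⟨s, hs⟩ : S) ∉ F := fun hsF => hn.2 _ hsF hsn
    have hsN : s < N := (Nat.le_of_dvd (Nat.pos_of_ne_zero hn0) hsn).trans_lt hn.1
    refine mem_union_right _ (mem_biUnion.2 ⟨⟨s, hs⟩, ?_, ?_⟩)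
    · simp [t, hsF, hsN]
    · simp [Nat.pos_of_ne_zero hn0, hn.1.le, hsn]
  calc _ ≤ _ := card_le_card hsub
    _ ≤ _ := (card_union_le _ _).trans (Nat.add_le_add_right (card_union_le _ _) _)
    _ ≤ _ := by
      rw [card_singleton]
      gcongr
      refine card_biUnion_le.trans (sum_le_sum fun s _ => ?_)
      rw [Nat.Ioc_filter_dvd_card_eq_div]

open scoped Classical in
theorem exists_eventually_count_isNonmultiple_div_le {S : Set ℕ}
    (h : Summable fun s : S => 1 / (s : ℝ)) {ε : ℝ} (hε : 0 < ε) :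
    ∃ F : Finset S, ∀ᶠ N : ℕ in atTop,
      (Nat.count (IsNonmultiple (↑) F) N : ℝ) / N - ε ≤
        Nat.count (fun n => 0 < n ∧ ∀ s ∈ S, ¬ s ∣ n) N / N := by
  obtain ⟨F, hF⟩ := h.vanishing (Iio_mem_nhds (half_pos hε))
  refine ⟨F, ?_⟩
  filter_upwards [(tendsto_const_div_atTop_nhds_zero_nat (1 : ℝ)).eventually
    (eventually_le_nhds (half_pos hε)), eventually_gt_atTop 0] with N hN1 hN0
  have hN : (0 : ℝ) < N := Nat.cast_pos.2 hN0
  set t := (range N).subtype (· ∈ S) \ F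
  have htail : ∑ s ∈ t, ((N / (s : ℕ) : ℕ) : ℝ) ≤ ε / 2 * N := by
    calc ∑ s ∈ t, ((N / (s : ℕ) : ℕ) : ℝ) ≤ ∑ s ∈ t, N * (1 / (s : ℝ)) :=
          sum_le_sum fun s _ => by rw [mul_one_div]; exact Nat.cast_div_le
      _ = N * ∑ s ∈ t, 1 / (s : ℝ) := (mul_sum _ _ _).symm
      _ ≤ N * (ε / 2) := by gcongr; exact (hF t sdiff_disjoint).le
      _ = ε / 2 * N := mul_comm _ _
  have hcount : (Nat.count (IsNonmultiple (↑) F) N : ℝ) ≤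
      Nat.count (fun n => 0 < n ∧ ∀ s ∈ S, ¬ s ∣ n) N + 1 + ε / 2 * N := by
    refine (Nat.cast_le.2 (count_isNonmultiple_le F N)).trans ?_
    push_cast
    linarith
  have hone : 1 ≤ ε / 2 * N := (div_le_iff₀ hN).1 hN1
  rw [div_sub' hN.ne', div_le_div_iff_of_pos_right hN]
  linarith

theorem tendsto_iInf_of_approx_from_above {α ι : Type*} [Nonempty ι] {l : Filter α}
    {u : α → ℝ} {v : ι → α → ℝ} {δ : ι → ℝ} (hv : ∀ i, Tendsto (v i) l (𝓝 (δ i)))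
    (hδ : BddBelow (Set.range δ)) (hle : ∀ i x, u x ≤ v i x)
    (happrox : ∀ ε > 0, ∃ i, ∀ᶠ x in l, v i x - ε ≤ u x) :
    Tendsto u l (𝓝 (⨅ i, δ i)) := by
  refine tendsto_order.2 ⟨fun b hb => ?_, fun b hb => ?_⟩
  · obtain ⟨i, hi⟩ := happrox (((⨅ i, δ i) - b) / 2) (half_pos (sub_pos.2 hb))
    have hδi : ⨅ i, δ i ≤ δ i := ciInf_le hδ i
    have hlt : δ i - ((⨅ i, δ i) - b) / 2 < δ i := by linarith
    filter_upwards [hi, (hv i).eventually (eventually_gt_nhds hlt)] with x hux hvx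
    linarith
  · obtain ⟨i, hi⟩ := exists_lt_of_ciInf_lt hb
    filter_upwards [(hv i).eventually (eventually_lt_nhds hi)] with x hx
    exact (hle i x).trans_lt hx

theorem countIn_setOf_eq_count {p : ℕ → Prop} [DecidablePred p] (hp0 : ¬ p 0) {x : ℝ}
    (hx : 0 ≤ x) : countIn {n | p n} x = Nat.count p (⌊x⌋₊ + 1) := by
  rw [countIn, Nat.count_eq_card_filter_range, ← Set.ncard_coe_finset]
  congr 1
  ext n
  simp only [Set.mem_inter_iff, coe_filter, mem_range, Nat.lt_succ_iff,
    ← Nat.le_floor_iff hx]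
  constructor
  · rintro ⟨hpn, -, hn⟩
    exact ⟨hn, hpn⟩
  · rintro ⟨hn, hpn⟩
    exact ⟨hpn, Nat.pos_of_ne_zero (by rintro rfl; exact hp0 hpn), hn⟩

theorem hasDensity_of_tendsto_count {p : ℕ → Prop} [DecidablePred p] (hp0 : ¬ p 0) {a : ℝ}
    (h : Tendsto (fun N : ℕ => (Nat.count p N : ℝ) / N) atTop (𝓝 a)) :
    HasDensity {n | p n} a := by
  have hcount : Tendsto (fun x : ℝ => (Nat.count p (⌊x⌋₊ + 1) : ℝ) / (⌊x⌋₊ + 1 : ℕ)) atTop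
      (𝓝 a) := (h.comp (tendsto_add_atTop_nat 1)).comp tendsto_nat_floor_atTop
  have hratio : Tendsto (fun x : ℝ => ((⌊x⌋₊ + 1 : ℕ) : ℝ) / x) atTop (𝓝 1) := by
    simpa [add_div] using (tendsto_nat_floor_div_atTop (R := ℝ)).add tendsto_inv_atTop_zero
  refine (mul_one a ▸ hcount.mul hratio).congr' ?_
  filter_upwards [eventually_gt_atTop 0] with x hx
  rw [countIn_setOf_eq_count hp0 hx.le, div_mul_div_cancel₀ (by positivity)]

theorem nonmultiples_density_pos (S : Set ℕ) (hS : ∀ s ∈ S, 0 < s) (h1 : 1 ∉ S)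
    (h : Summable (fun s : S => (1 : ℝ) / (s : ℝ))) :
    ∃ a : ℝ, HasDensity {n : ℕ | 0 < n ∧ ∀ s ∈ S, ¬ s ∣ n} a ∧ 0 < a ∧
      (∏' s : S, (1 - 1 / (s : ℝ))) ≤ a := by
  classical
  have hS2 : ∀ s : S, 1 / (s : ℝ) < 1 := fun s => by
    have : 1 < (s : ℕ) := lt_of_le_of_ne (hS s s.2) fun hs => h1 (hs ▸ s.2)
    exact (div_lt_one (by positivity)).2 (by exact_mod_cast this)
  have hpos : ∀ F : Finset S, 0 < ∏ s ∈ F, (s : ℕ) := fun F => prod_pos fun s _ => hS s s.2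
  set δ : Finset S → ℝ := fun F =>
    Nat.count (IsNonmultiple (↑) F) (∏ s ∈ F, (s : ℕ)) / (∏ s ∈ F, (s : ℕ) : ℕ)
  have hδ : ∀ F, ∏' s : S, (1 - 1 / (s : ℝ)) ≤ δ F := fun F =>
    (Real.tprod_one_sub_le_prod h (fun _ => by positivity) hS2 F).trans
      (prod_one_sub_le_count_isNonmultiple F fun s _ => hS s s.2)
  refine ⟨⨅ F, δ F, hasDensity_of_tendsto_count (by simp) ?_,
    (Real.tprod_one_sub_pos h hS2).trans_le (le_ciInf hδ), le_ciInf hδ⟩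
  refine tendsto_iInf_of_approx_from_above
    (fun F => Nat.tendsto_count_div_of_periodic (isNonmultiple_periodic F) (hpos F))
    ⟨_, Set.forall_mem_range.2 hδ⟩ (fun F N => ?_)
    fun ε hε => exists_eventually_count_isNonmultiple_div_le h hε
  refine div_le_div_of_nonneg_right (Nat.cast_le.2 (Nat.count_mono_left ?_)) (Nat.cast_nonneg N)
  exact fun k _ hk s _ => hk.2 s s.2
end

section
/- For every γ > 0 there exists a constant C > 0 such that for all x > 0, the number of primes p ≤ x with z(p) ≤ p^γ is at most C · x^{2γ}. -/
open scoped BigOperators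

lemma fib_cast_pred (p a : ℕ) (ha : 1 ≤ a) :
    ((Nat.fib (a - 1) : ZMod p)) = (Nat.fib (a + 1) : ZMod p) - Nat.fib a := by
  obtain ⟨k, rfl⟩ := Nat.exists_eq_add_of_le ha
  have : Nat.fib (k + 2) = Nat.fib k + Nat.fib (k + 1) := Nat.fib_add_two
  have h1 : 1 + k - 1 = k := by omega
  have h2 : 1 + k + 1 = k + 2 := by omega
  have h3 : 1 + k = k + 1 := by omega
  rw [h1, h2, h3, this]
  push_cast
  ring

lemma fib_back (p : ℕ) : ∀ m n : ℕ, m < n →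
    (Nat.fib m : ZMod p) = Nat.fib n → (Nat.fib (m + 1) : ZMod p) = Nat.fib (n + 1) →
    (Nat.fib (n - m) : ZMod p) = 0 := by
  intro m
  induction m with
  | zero => intro n _ h1 _; simpa using h1.symm
  | succ k ih =>
    intro n hmn h1 h2
    have hn1 : 1 ≤ n := by omega
    have e1 : (Nat.fib k : ZMod p) = Nat.fib (n - 1) := by
      have hk : (Nat.fib ((k + 1) - 1) : ZMod p) = (Nat.fib (k + 2) : ZMod p) - Nat.fib (k + 1) :=
        fib_cast_pred p (k + 1) (by omega)
      have hn : (Nat.fib (n - 1) : ZMod p) = (Nat.fib (n + 1) : ZMod p) - Nat.fib n :=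
        fib_cast_pred p n hn1
      simp only [Nat.add_sub_cancel] at hk
      rw [hk, hn, h1, h2]
    have e2 : (Nat.fib (k + 1) : ZMod p) = Nat.fib ((n - 1) + 1) := by
      rw [Nat.sub_add_cancel hn1]; exact h1
    have key := ih (n - 1) (by omega) e1 e2
    have heq : (n - 1) - k = n - (k + 1) := by omega
    rwa [heq] at key

lemma exists_pos_dvd_fib (p : ℕ) (hp : 0 < p) : ∃ n, 0 < n ∧ p ∣ Nat.fib n := by
  haveI : NeZero p := ⟨hp.ne'⟩
  obtain ⟨i, j, hne, hE⟩ := Fintype.exists_ne_map_eq_of_card_lt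
    (fun i : Fin (p * p + 1) => ((Nat.fib i : ZMod p), (Nat.fib (i + 1) : ZMod p)))
    (by simp [ZMod.card])
  have hE1 := congrArg Prod.fst hE
  have hE2 := congrArg Prod.snd hE
  simp only at hE1 hE2
  rcases lt_or_gt_of_ne (fun h : (i : ℕ) = j => hne (Fin.ext h)) with h | h
  · exact ⟨(j : ℕ) - i, by omega,
      (ZMod.natCast_eq_zero_iff _ _).mp (fib_back p i j h hE1 hE2)⟩
  · exact ⟨(i : ℕ) - j, by omega,
      (ZMod.natCast_eq_zero_iff _ _).mp (fib_back p j i h hE1.symm hE2.symm)⟩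

lemma fib_le_two_pow : ∀ n : ℕ, Nat.fib n ≤ 2 ^ n := by
  intro n
  induction n using Nat.strong_induction_on with
  | _ n ih =>
    match n with
    | 0 => simp
    | 1 => simp
    | (k + 2) =>
      have h1 := ih k (by omega)
      have h2 := ih (k + 1) (by omega)
      calc Nat.fib (k + 2) = Nat.fib k + Nat.fib (k + 1) := Nat.fib_add_two
        _ ≤ 2 ^ k + 2 ^ (k + 1) := by omega
        _ ≤ 2 ^ (k + 2) := by ring_nf; omega

lemma card_primeFactors_fib_le (n : ℕ) (hn : 0 < n) : (Nat.fib n).primeFactors.card ≤ n := by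
  have hf : 0 < Nat.fib n := Nat.fib_pos.mpr hn
  have h2 : 2 ^ (Nat.fib n).primeFactors.card ≤ Nat.fib n := by
    calc 2 ^ (Nat.fib n).primeFactors.card
        = ∏ _p ∈ (Nat.fib n).primeFactors, 2 := by rw [Finset.prod_const]
      _ ≤ ∏ p ∈ (Nat.fib n).primeFactors, p :=
          Finset.prod_le_prod' (fun p hp => (Nat.prime_of_mem_primeFactors hp).two_le)
      _ ≤ Nat.fib n := Nat.le_of_dvd hf (Nat.prod_primeFactors_dvd _)
  have := h2.trans (fib_le_two_pow n)
  exact (Nat.pow_le_pow_iff_right (by norm_num)).mp this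

theorem card_small_rank_primes_le (γ : ℝ) (hγ : 0 < γ) :
    ∃ C : ℝ, 0 < C ∧ ∀ x : ℝ, 0 < x →
      (({p : ℕ | p.Prime ∧ (fibZ p : ℝ) ≤ (p : ℝ) ^ γ ∧ (p : ℝ) ≤ x}.ncard : ℝ)) ≤
        C * x ^ (2 * γ) := by
  refine ⟨4, by norm_num, fun x hx => ?_⟩
  rcases lt_or_ge x 1 with hx1 | hx1
  · -- no primes ≤ x
    have : {p : ℕ | p.Prime ∧ (fibZ p : ℝ) ≤ (p : ℝ) ^ γ ∧ (p : ℝ) ≤ x} = ∅ := by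
      ext p
      simp only [Set.mem_setOf_eq, Set.mem_empty_iff_false, iff_false, not_and]
      intro hp _
      have : (2 : ℝ) ≤ p := by exact_mod_cast hp.two_le
      linarith
    rw [this]
    simp only [Set.ncard_empty, Nat.cast_zero]
    positivity
  · set N : ℕ := ⌈x ^ γ⌉₊ with hN
    set T : Finset ℕ := (Finset.Icc 1 N).biUnion (fun n => (Nat.fib n).primeFactors) with hT
    have hsub : {p : ℕ | p.Prime ∧ (fibZ p : ℝ) ≤ (p : ℝ) ^ γ ∧ (p : ℝ) ≤ x} ⊆ ↑T := by
      intro p hp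
      obtain ⟨hpp, hz, hpx⟩ := hp
      have hmem : fibZ p ∈ {n : ℕ | 0 < n ∧ p ∣ Nat.fib n} :=
        Nat.sInf_mem (exists_pos_dvd_fib p hpp.pos)
      obtain ⟨hzpos, hzdvd⟩ := hmem
      have hzN : fibZ p ≤ N := by
        have h1 : ((p : ℝ)) ^ γ ≤ x ^ γ :=
          Real.rpow_le_rpow (by positivity) hpx hγ.le
        have h2 : (fibZ p : ℝ) ≤ (N : ℝ) := le_trans hz (h1.trans (Nat.le_ceil _))
        exact_mod_cast h2
      simp only [hT, Finset.coe_biUnion, Set.mem_iUnion, Finset.mem_coe, Finset.mem_Icc]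
      exact ⟨fibZ p, ⟨hzpos, hzN⟩,
        Nat.mem_primeFactors.mpr ⟨hpp, hzdvd, (Nat.fib_pos.mpr hzpos).ne'⟩⟩
    have hcard : {p : ℕ | p.Prime ∧ (fibZ p : ℝ) ≤ (p : ℝ) ^ γ ∧ (p : ℝ) ≤ x}.ncard ≤ T.card := by
      rw [← Set.ncard_coe_finset T]
      exact Set.ncard_le_ncard hsub T.finite_toSet
    have hTcard : T.card ≤ N * N := by
      calc T.card ≤ ∑ n ∈ Finset.Icc 1 N, (Nat.fib n).primeFactors.card :=
            Finset.card_biUnion_le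
        _ ≤ ∑ n ∈ Finset.Icc 1 N, n :=
            Finset.sum_le_sum (fun n hn =>
              card_primeFactors_fib_le n (Finset.mem_Icc.mp hn).1)
        _ ≤ ∑ _n ∈ Finset.Icc 1 N, N :=
            Finset.sum_le_sum (fun n hn => (Finset.mem_Icc.mp hn).2)
        _ = N * N := by
            simp [Finset.sum_const, Nat.card_Icc, smul_eq_mul]
    have hxg1 : (1 : ℝ) ≤ x ^ γ := Real.one_le_rpow hx1 hγ.le
    have hNle : (N : ℝ) ≤ 2 * x ^ γ := by
      have := Nat.ceil_lt_add_one (show (0:ℝ) ≤ x ^ γ by positivity)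
      calc (N : ℝ) ≤ x ^ γ + 1 := le_of_lt this
        _ ≤ 2 * x ^ γ := by linarith
    have hfinal : ((N : ℝ)) * N ≤ 4 * x ^ (2 * γ) := by
      have hx2 : x ^ (2 * γ) = (x ^ γ) * (x ^ γ) := by
        rw [two_mul, Real.rpow_add hx]
      rw [hx2]
      nlinarith [Nat.cast_nonneg (α := ℝ) N]
    calc (({p : ℕ | p.Prime ∧ (fibZ p : ℝ) ≤ (p : ℝ) ^ γ ∧ (p : ℝ) ≤ x}.ncard : ℝ))
        ≤ ((N * N : ℕ) : ℝ) := by exact_mod_cast hcard.trans hTcard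
      _ = (N : ℝ) * N := by push_cast; ring
      _ ≤ 4 * x ^ (2 * γ) := hfinal
end

section
/- Let k be a positive integer such that A_k = {n ≥ 1 : gcd(n, F_n) = k} is nonempty. Define L_k as the union of the set of primes p dividing k and the set {ℓ(kp)/ℓ(k) : p prime, p ∤ k}. Then A_k = {ℓ(k)·m : m ∈ N(L_k)}, where N(L_k) = {m ≥ 1 : s ∤ m for all s ∈ L_k}. -/
open scoped BigOperators

open Nat (fib)

/-!
Since `m ∣ F_n ↔ z(m) ∣ n`, a positive `d` divides `gcd(n, F_n)` exactly when `ℓ(d) ∣ n`. Hence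
`n ∈ A_k` iff `ℓ(k) ∣ n` and `ℓ(kp) ∤ n` for every prime `p`; writing `n = ℓ(k) m`, the latter says
`ℓ(kp)/ℓ(k) ∤ m`. For a prime `p ∣ k` this quotient is `p`: it divides `p` because
`F_{rp} ≡ p F_{r+1}^{p-1} F_r (mod F_r²)` gives `kp ∣ F_{p z(k)}`, and it is not `1` because some
`n ∈ A_k` is divisible by `ℓ(k)` but not by `ℓ(kp)`.
-/

def fibStep (R : Type*) [AddGroup R] : Equiv.Perm (R × R) where
  toFun x := (x.2, x.1 + x.2)
  invFun x := (x.2 - x.1, x.1)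
  left_inv x := by simp
  right_inv x := by simp

lemma fibStep_pow_apply (R : Type*) [AddGroupWithOne R] (n : ℕ) :
    (fibStep R ^ n) (0, 1) = ((fib n : R), (fib (n + 1) : R)) := by
  induction n with
  | zero => simp
  | succ n ih =>
    rw [pow_succ', Equiv.Perm.mul_apply, ih]
    simp [fibStep, Nat.fib_add_two]

/-- `fibStep` permutes the finite set `(ZMod m)²`, so a positive power of it fixes `(0, 1)`. -/
lemma exists_pos_dvd_fib_s7 {m : ℕ} (hm : 0 < m) : ∃ n, 0 < n ∧ m ∣ fib n := by
  have : NeZero m := ⟨hm.ne'⟩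
  refine ⟨orderOf (fibStep (ZMod m)), orderOf_pos _, (ZMod.natCast_eq_zero_iff _ _).1 ?_⟩
  have h := congrArg Prod.fst (fibStep_pow_apply (ZMod m) (orderOf (fibStep (ZMod m))))
  rwa [pow_orderOf_eq_one, Equiv.Perm.one_apply, eq_comm] at h

lemma fibZ_pos {m : ℕ} (hm : 0 < m) : 0 < fibZ m :=
  (Nat.sInf_mem (exists_pos_dvd_fib_s7 hm)).1

lemma dvd_fib_fibZ {m : ℕ} (hm : 0 < m) : m ∣ fib (fibZ m) :=
  (Nat.sInf_mem (exists_pos_dvd_fib_s7 hm)).2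

lemma dvd_fib_iff_fibZ_dvd {m : ℕ} (hm : 0 < m) (n : ℕ) : m ∣ fib n ↔ fibZ m ∣ n := by
  refine ⟨fun h => ?_, fun h => (dvd_fib_fibZ hm).trans (Nat.fib_dvd _ _ h)⟩
  have hgcd : m ∣ fib (Nat.gcd n (fibZ m)) := by
    rw [Nat.fib_gcd]
    exact Nat.dvd_gcd h (dvd_fib_fibZ hm)
  have hle : fibZ m ≤ Nat.gcd n (fibZ m) :=
    Nat.sInf_le ⟨Nat.gcd_pos_of_pos_right _ (fibZ_pos hm), hgcd⟩
  rw [← Nat.gcd_eq_right_iff_dvd]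
  exact le_antisymm (Nat.le_of_dvd (fibZ_pos hm) (Nat.gcd_dvd_right _ _)) hle

lemma fibZ_dvd_fibZ {a b : ℕ} (hb : 0 < b) (hab : a ∣ b) : fibZ a ∣ fibZ b := by
  rw [← dvd_fib_iff_fibZ_dvd (Nat.pos_of_dvd_of_pos hab hb)]
  exact hab.trans (dvd_fib_fibZ hb)

lemma fibL_pos {m : ℕ} (hm : 0 < m) : 0 < fibL m :=
  Nat.lcm_pos hm (fibZ_pos hm)

lemma fibL_dvd_fibL {a b : ℕ} (hb : 0 < b) (hab : a ∣ b) : fibL a ∣ fibL b :=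
  Nat.lcm_dvd (hab.trans (Nat.dvd_lcm_left _ _))
    ((fibZ_dvd_fibZ hb hab).trans (Nat.dvd_lcm_right _ _))

lemma dvd_gcd_fib_iff_fibL_dvd {d : ℕ} (hd : 0 < d) (n : ℕ) :
    d ∣ Nat.gcd n (fib n) ↔ fibL d ∣ n := by
  rw [Nat.dvd_gcd_iff, dvd_fib_iff_fibZ_dvd hd, fibL, Nat.lcm_dvd_iff]

lemma cast_fib_mul_succ (s n : ℕ) :
    (fib ((s + 1) * (n + 1)) : ZMod (fib (s + 1) ^ 2)) = (n + 1) * fib (s + 2) ^ n * fib (s + 1) ∧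
    (fib ((s + 1) * (n + 1) + 1) : ZMod (fib (s + 1) ^ 2)) = fib (s + 2) ^ (n + 1) := by
  have hsq : (fib (s + 1) : ZMod (fib (s + 1) ^ 2)) ^ 2 = 0 := by exact_mod_cast ZMod.natCast_self _
  have hs : (fib s : ZMod (fib (s + 1) ^ 2)) = fib (s + 2) - fib (s + 1) := by
    rw [Nat.fib_add_two]; push_cast; ring
  induction n with
  | zero => simp
  | succ n ih =>
    obtain ⟨ih₁, ih₂⟩ := ih
    have e₁ : (s + 1) * (n + 1 + 1) = (s + 1) * (n + 1) + s + 1 := by ring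
    have e₂ : (s + 1) * (n + 1 + 1) + 1 = (s + 1) * (n + 1) + (s + 1) + 1 := by ring
    rw [e₂, e₁, Nat.fib_add _ s, Nat.fib_add _ (s + 1)]
    push_cast
    rw [ih₁, ih₂, hs]
    constructor
    · linear_combination (-(n + 1 : ZMod (fib (s + 1) ^ 2)) * fib (s + 2) ^ n) * hsq
    · linear_combination ((n + 1 : ZMod (fib (s + 1) ^ 2)) * fib (s + 2) ^ n) * hsq

lemma mul_dvd_fib_mul {m p r : ℕ} (hm : m ∣ fib r) (hp : p ∣ fib r) : m * p ∣ fib (r * p) := by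
  obtain _ | s := r
  · simp
  obtain _ | n := p
  · simp
  have hsq : m * (n + 1) ∣ fib (s + 1) ^ 2 := sq (fib (s + 1)) ▸ mul_dvd_mul hm hp
  have h := congrArg (ZMod.castHom hsq (ZMod (m * (n + 1)))) (cast_fib_mul_succ s n).1
  simp only [map_natCast, map_mul, map_pow, map_add, map_one] at h
  have hpF : (fib (s + 1) * (n + 1) : ZMod (m * (n + 1))) = 0 := by
    exact_mod_cast (ZMod.natCast_eq_zero_iff _ _).2 (Nat.mul_dvd_mul_right hm (n + 1))
  rw [← ZMod.natCast_eq_zero_iff, h]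
  linear_combination (fib (s + 2) : ZMod (m * (n + 1))) ^ n * hpF

lemma fibL_mul_dvd_mul_fibL {k p : ℕ} (hk : 0 < k) (hpk : p ∣ k) : fibL (k * p) ∣ p * fibL k := by
  have hp : 0 < p := Nat.pos_of_dvd_of_pos hpk hk
  have hkp : k * p ∣ fib (fibZ k * p) :=
    mul_dvd_fib_mul (dvd_fib_fibZ hk) (hpk.trans (dvd_fib_fibZ hk))
  rw [dvd_fib_iff_fibZ_dvd (Nat.mul_pos hk hp)] at hkp
  rw [mul_comm p]
  exact Nat.lcm_dvd (Nat.mul_dvd_mul_right (Nat.dvd_lcm_left _ _) p)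
    (hkp.trans (Nat.mul_dvd_mul_right (Nat.dvd_lcm_right _ _) p))

lemma eq_of_dvd_of_forall_prime_not_mul_dvd {g k : ℕ} (hg : g ≠ 0) (hkg : k ∣ g)
    (h : ∀ p, p.Prime → ¬ k * p ∣ g) : g = k := by
  obtain ⟨t, rfl⟩ := hkg
  by_contra hne
  obtain ⟨p, hp, hpt⟩ := Nat.exists_prime_and_dvd (fun ht : t = 1 => hne (by rw [ht, mul_one]))
  exact h p hp (Nat.mul_dvd_mul_left k hpt)

lemma mem_fibA_iff {k n : ℕ} (hk : 0 < k) :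
    n ∈ fibA k ↔ 0 < n ∧ fibL k ∣ n ∧ ∀ p, p.Prime → ¬ fibL (k * p) ∣ n := by
  constructor
  · rintro ⟨hn, rfl⟩
    refine ⟨hn, (dvd_gcd_fib_iff_fibL_dvd hk n).1 dvd_rfl, fun p hp h => ?_⟩
    have := Nat.le_of_dvd hk ((dvd_gcd_fib_iff_fibL_dvd (Nat.mul_pos hk hp.pos) n).2 h)
    nlinarith [hp.two_le]
  · rintro ⟨hn, hkn, hpn⟩
    refine ⟨hn, eq_of_dvd_of_forall_prime_not_mul_dvd (Nat.gcd_pos_of_pos_left _ hn).ne'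
      ((dvd_gcd_fib_iff_fibL_dvd hk n).2 hkn) fun p hp h => hpn p hp ?_⟩
    exact (dvd_gcd_fib_iff_fibL_dvd (Nat.mul_pos hk hp.pos) n).1 h

lemma fibL_mul_of_prime_dvd {k p : ℕ} (hk : 0 < k) (hA : (fibA k).Nonempty) (hp : p.Prime)
    (hpk : p ∣ k) : fibL (k * p) = p * fibL k := by
  obtain ⟨n, hn⟩ := hA
  obtain ⟨-, hkn, hpn⟩ := (mem_fibA_iff hk).1 hn
  obtain ⟨c, hc⟩ := fibL_dvd_fibL (Nat.mul_pos hk hp.pos) (dvd_mul_right k p)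
  have hcp : c ∣ p := by
    rw [← Nat.mul_dvd_mul_iff_left (fibL_pos hk), ← hc, mul_comm (fibL k)]
    exact fibL_mul_dvd_mul_fibL hk hpk
  rcases (Nat.dvd_prime hp).1 hcp with rfl | rfl
  · rw [mul_one] at hc
    exact absurd (hc ▸ hkn) (hpn p hp)
  · rw [hc, mul_comm]

lemma fibL_mul_div_fibL_dvd_iff {k p : ℕ} (hk : 0 < k) (hp : 0 < p) (m : ℕ) :
    fibL (k * p) / fibL k ∣ m ↔ fibL (k * p) ∣ fibL k * m :=
  Nat.div_dvd_iff_dvd_mul (fibL_dvd_fibL (Nat.mul_pos hk hp) (dvd_mul_right k p)) (fibL_pos hk)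

lemma primeFactors_union_fibL_quot_eq {k : ℕ} (hk : 0 < k) (hA : (fibA k).Nonempty) :
    {p : ℕ | p.Prime ∧ p ∣ k} ∪ {q : ℕ | ∃ p : ℕ, p.Prime ∧ ¬ p ∣ k ∧ q = fibL (k * p) / fibL k} =
      {q : ℕ | ∃ p : ℕ, p.Prime ∧ q = fibL (k * p) / fibL k} := by
  ext q
  simp only [Set.mem_union, Set.mem_ofPred_eq]
  constructor
  · rintro (⟨hq, hqk⟩ | ⟨p, hp, -, rfl⟩)
    · exact ⟨q, hq, by rw [fibL_mul_of_prime_dvd hk hA hq hqk, Nat.mul_div_cancel _ (fibL_pos hk)]⟩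
    · exact ⟨p, hp, rfl⟩
  · rintro ⟨p, hp, rfl⟩
    by_cases hpk : p ∣ k
    · left
      rw [fibL_mul_of_prime_dvd hk hA hp hpk, Nat.mul_div_cancel _ (fibL_pos hk)]
      exact ⟨hp, hpk⟩
    · exact Or.inr ⟨p, hp, hpk, rfl⟩

theorem fibA_eq_scaled_nonmultiples (k : ℕ) (hk : 0 < k) (hA : (fibA k).Nonempty) :
    fibA k = (fun m => fibL k * m) ''
      {m : ℕ | 0 < m ∧ ∀ s ∈ ({p : ℕ | p.Prime ∧ p ∣ k} ∪
        {q : ℕ | ∃ p : ℕ, p.Prime ∧ ¬ p ∣ k ∧ q = fibL (k * p) / fibL k}), ¬ s ∣ m} := by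
  rw [primeFactors_union_fibL_quot_eq hk hA]
  ext n
  simp only [mem_fibA_iff hk, Set.mem_image, Set.mem_ofPred_eq, forall_exists_index, and_imp]
  constructor
  · rintro ⟨hn, ⟨m, rfl⟩, hpn⟩
    refine ⟨m, ⟨Nat.pos_of_mul_pos_left hn, ?_⟩, rfl⟩
    rintro _ p hp rfl
    rw [fibL_mul_div_fibL_dvd_iff hk hp.pos]
    exact hpn p hp
  · rintro ⟨m, ⟨hm, hpm⟩, rfl⟩
    refine ⟨Nat.mul_pos (fibL_pos hk) hm, dvd_mul_right _ _, fun p hp => ?_⟩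
    rw [← fibL_mul_div_fibL_dvd_iff hk hp.pos]
    exact hpm _ p hp rfl
end

section
/- For every positive integer k and every real x > 0, the counting functions of A_k and of the sets B_{dk} satisfy #A_k(x) = ∑_{d ∣ k} μ(d) · #B_{dk}(x), where the sum is over the positive divisors d of k. -/
open scoped BigOperators

/-- `fibB k` is the set of positive `n` such that `k ∣ gcd(n, F_n)` and every prime
dividing `gcd(n, F_n)` divides `k`. -/
def fibB (k : ℕ) : Set ℕ :=
  {n : ℕ | 0 < n ∧ k ∣ Nat.gcd n (Nat.fib n) ∧
    ∀ p : ℕ, p.Prime → p ∣ Nat.gcd n (Nat.fib n) → p ∣ k}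

open Finset ArithmeticFunction in
lemma aux_moebius_sum (m : ℕ) (hm : m ≠ 0) :
    ∑ d ∈ m.divisors, (ArithmeticFunction.moebius d : ℤ) = if m = 1 then 1 else 0 := by
  have h := congrArg (fun f : ArithmeticFunction ℤ => f m) ArithmeticFunction.moebius_mul_coe_zeta
  simp only [ArithmeticFunction.mul_apply, ArithmeticFunction.one_apply] at h
  calc ∑ d ∈ m.divisors, (ArithmeticFunction.moebius d : ℤ)
      = ∑ d ∈ m.divisors, ArithmeticFunction.moebius d *
          ((ArithmeticFunction.zeta (m / d) : ℕ) : ℤ) := by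
        apply Finset.sum_congr rfl
        intro d hd
        rw [Nat.mem_divisors] at hd
        have hne : m / d ≠ 0 := Nat.div_ne_zero_iff_of_dvd hd.1 |>.mpr ⟨hm, fun h0 => by
          subst h0; exact hm (Nat.zero_dvd.mp hd.1)⟩
        rw [ArithmeticFunction.zeta_apply_ne hne, Nat.cast_one, mul_one]
    _ = ∑ x ∈ m.divisorsAntidiagonal, ArithmeticFunction.moebius x.1 *
          ((ArithmeticFunction.zeta x.2 : ℕ) : ℤ) :=
        (Nat.sum_divisorsAntidiagonal (fun d e => ArithmeticFunction.moebius d *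
          ((ArithmeticFunction.zeta e : ℕ) : ℤ))).symm
    _ = if m = 1 then 1 else 0 := h

open Classical in
lemma countIn_eq (S : Set ℕ) (x : ℝ) (hx : 0 ≤ x) :
    countIn S x = ((Finset.Icc 1 ⌊x⌋₊).filter (· ∈ S)).card := by
  rw [countIn, ← Set.ncard_coe_finset]
  congr 1
  ext n
  simp only [Set.mem_inter_iff, Set.mem_setOf_eq, Finset.coe_filter, Finset.mem_Icc,
    Set.mem_setOf_eq, Nat.le_floor_iff hx]
  tauto

open Classical in
lemma key_pointwise (k n : ℕ) (hk : 0 < k) (hn : 0 < n) :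
    (if n ∈ fibA k then (1 : ℤ) else 0) =
      ∑ d ∈ k.divisors, ArithmeticFunction.moebius d * (if n ∈ fibB (d * k) then 1 else 0) := by
  classical
  set g := Nat.gcd n (Nat.fib n) with hgdef
  have hg : 0 < g := Nat.gcd_pos_of_pos_left _ hn
  by_cases hC : k ∣ g ∧ ∀ p : ℕ, p.Prime → p ∣ g → p ∣ k
  · obtain ⟨hkg, hp⟩ := hC
    set m := g / k with hmdef
    have hgm : g = k * m := (Nat.mul_div_cancel' hkg).symm
    have hm : 0 < m := by
      rcases Nat.eq_zero_or_pos m with h0 | h0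
      · rw [h0, mul_zero] at hgm; omega
      · exact h0
    have hmem : ∀ d ∈ k.divisors, (n ∈ fibB (d * k) ↔ d ∣ m) := by
      intro d hd
      rw [Nat.mem_divisors] at hd
      constructor
      · rintro ⟨-, hdk, -⟩
        rw [← hgdef, hgm, mul_comm d k] at hdk
        exact (mul_dvd_mul_iff_left (by omega : k ≠ 0)).mp hdk
      · intro hdm
        refine ⟨hn, ?_, fun p pp hpg => (hp p pp hpg).mul_left d⟩
        rw [← hgdef, hgm, mul_comm d k]
        exact mul_dvd_mul_left k hdm
    have hfilter : k.divisors.filter (· ∣ m) = (Nat.gcd k m).divisors := by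
      ext d
      simp only [Finset.mem_filter, Nat.mem_divisors, Nat.dvd_gcd_iff]
      constructor
      · rintro ⟨⟨h1, -⟩, h2⟩; exact ⟨⟨h1, h2⟩, (Nat.gcd_pos_of_pos_left _ hk).ne'⟩
      · rintro ⟨⟨h1, h2⟩, -⟩; exact ⟨⟨h1, by omega⟩, h2⟩
    have hsum : ∑ d ∈ k.divisors, ArithmeticFunction.moebius d *
        (if n ∈ fibB (d * k) then (1:ℤ) else 0) =
        ∑ d ∈ (Nat.gcd k m).divisors, (ArithmeticFunction.moebius d : ℤ) := by
      calc ∑ d ∈ k.divisors, ArithmeticFunction.moebius d *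
            (if n ∈ fibB (d * k) then (1:ℤ) else 0)
          = ∑ d ∈ k.divisors, (if d ∣ m then (ArithmeticFunction.moebius d : ℤ) else 0) := by
            apply Finset.sum_congr rfl
            intro d hd
            by_cases h : d ∣ m
            · rw [if_pos h, if_pos ((hmem d hd).mpr h), mul_one]
            · rw [if_neg h, if_neg (fun hx => h ((hmem d hd).mp hx)), mul_zero]
        _ = ∑ d ∈ k.divisors.filter (· ∣ m), (ArithmeticFunction.moebius d : ℤ) :=
            (Finset.sum_filter _ _).symm
        _ = ∑ d ∈ (Nat.gcd k m).divisors, (ArithmeticFunction.moebius d : ℤ) := by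
            rw [hfilter]
    rw [hsum, aux_moebius_sum _ (Nat.gcd_pos_of_pos_left _ hk).ne']
    have hgcd1 : Nat.gcd k m = 1 ↔ m = 1 := by
      constructor
      · intro h1
        by_contra hm1
        have pp := Nat.minFac_prime hm1
        have hpm : m.minFac ∣ m := Nat.minFac_dvd m
        have hpk : m.minFac ∣ k := hp _ pp (hpm.trans ⟨k, by rw [hgm]; ring⟩)
        have hdv : m.minFac ∣ 1 := h1 ▸ Nat.dvd_gcd hpk hpm
        exact pp.ne_one (Nat.dvd_one.mp hdv)
      · intro hm1; rw [hm1, Nat.gcd_one_right]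
    have hA : n ∈ fibA k ↔ m = 1 := by
      constructor
      · rintro ⟨-, hgk⟩
        rw [← hgdef] at hgk
        have h2 : k * m = k * 1 := by rw [← hgm, hgk, mul_one]
        exact Nat.eq_of_mul_eq_mul_left hk h2
      · intro hm1
        exact ⟨hn, by rw [← hgdef, hgm, hm1, mul_one]⟩
    rw [if_congr hA rfl rfl, if_congr hgcd1 rfl rfl]
  · have hA : n ∉ fibA k := by
      rintro ⟨-, hgk⟩
      rw [← hgdef] at hgk
      exact hC ⟨hgk ▸ dvd_refl k, fun p _ hpg => hgk ▸ hpg⟩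
    rw [if_neg hA]
    refine (Finset.sum_eq_zero fun d hd => ?_).symm
    rw [Nat.mem_divisors] at hd
    have hB : n ∉ fibB (d * k) := by
      rintro ⟨-, hdk, hpr⟩
      rw [← hgdef] at hdk
      refine hC ⟨(dvd_mul_left k d).trans hdk, fun p pp hpg => ?_⟩
      rw [← hgdef] at hpr
      rcases (Nat.Prime.dvd_mul pp).mp (hpr p pp hpg) with h | h
      · exact h.trans hd.1
      · exact h
    rw [if_neg hB, mul_zero]

theorem count_fibA_eq_sum_count_fibB (k : ℕ) (hk : 0 < k) (x : ℝ) (hx : 0 < x) :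
    (countIn (fibA k) x : ℤ) =
      ∑ d ∈ k.divisors, ArithmeticFunction.moebius d * (countIn (fibB (d * k)) x : ℤ) := by
  classical
  have hx0 : (0:ℝ) ≤ x := le_of_lt hx
  have hcount : ∀ S : Set ℕ, (countIn S x : ℤ) =
      ∑ n ∈ Finset.Icc 1 ⌊x⌋₊, (if n ∈ S then (1:ℤ) else 0) := by
    intro S
    rw [countIn_eq S x hx0, Finset.card_filter]
    push_cast
    rfl
  rw [hcount]
  have : ∀ d, (countIn (fibB (d * k)) x : ℤ) =
      ∑ n ∈ Finset.Icc 1 ⌊x⌋₊, (if n ∈ fibB (d * k) then (1:ℤ) else 0) := fun d => hcount _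
  simp_rw [this, Finset.mul_sum]
  rw [Finset.sum_comm]
  apply Finset.sum_congr rfl
  intro n hn
  rw [Finset.mem_Icc] at hn
  exact key_pointwise k n hk (by omega)
end

section
/- For every prime p and every positive integer n, if z(p) divides n then the p-adic valuation of F_n is at least the p-adic valuation of n, i.e., ν_p(F_n) ≥ ν_p(n). -/
open scoped BigOperators

/-
The rank of appearance `z = z(p)` satisfies `ν_p(z) ≤ 1`: the pairs `(F_i, F_{i+1}) mod p` with
`i < p²` avoid `(0, 0)`, so two of them coincide, which forces `z < p²`. On the other hand, modulo
`F_m²` one has `F_{km} ≡ k F_m F_{m+1}^(k-1)`, so multiplying the index by `p` raises the `p`-adic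
valuation of `F_m` by at least one as soon as `p ∣ F_m`. Writing `n = z c`, `F_n` is a multiple
of `F_{p^{ν_p(c)} z}`, which is divisible by `p^{ν_p(c) + 1}`, while `ν_p(n) = ν_p(z) + ν_p(c)`.
-/

namespace Nat

lemma cast_fib_add {R : Type*} [CommRing R] (m n : ℕ) :
    (fib (m + n) : R) = fib m * fib (n + 1) + fib (m + 1) * fib n - fib m * fib n := by
  cases n with
  | zero => simp
  | succ n =>
    rw [← add_assoc, fib_add, fib_add_two]
    push_cast
    ring

lemma cast_fib_succ_mul_of_sq_eq_zero {R : Type*} [CommRing R] {m : ℕ}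
    (h : (fib m : R) ^ 2 = 0) (k : ℕ) :
    (fib ((k + 1) * m) : R) = (k + 1) * fib m * fib (m + 1) ^ k ∧
      (fib ((k + 1) * m + 1) : R) = fib (m + 1) ^ (k + 1) := by
  induction k with
  | zero => simp
  | succ k ih =>
    obtain ⟨ih₀, ih₁⟩ := ih
    rw [add_mul _ 1, one_mul, cast_fib_add, fib_add]
    push_cast
    rw [ih₀, ih₁]
    constructor
    · linear_combination (-(k + 1) * fib (m + 1) ^ k : R) * h
    · linear_combination ((k + 1) * fib (m + 1) ^ k : R) * h

lemma pow_succ_dvd_fib_mul {q a m : ℕ} (ha : a ≠ 0) (hdvd : q ^ a ∣ fib m) :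
    q ^ (a + 1) ∣ fib (q * m) := by
  cases q with
  | zero => simp
  | succ k =>
    rw [← ZMod.natCast_eq_zero_iff]
    have hsq : (fib m : ZMod ((k + 1) ^ (a + 1))) ^ 2 = 0 := by
      rw [← Nat.cast_pow, ZMod.natCast_eq_zero_iff]
      exact (pow_dvd_pow _ (by omega : a + 1 ≤ a * 2)).trans
        (by rw [pow_mul]; exact pow_dvd_pow_of_dvd hdvd 2)
    have hmul : ((k + 1 : ℕ) * fib m : ZMod ((k + 1) ^ (a + 1))) = 0 := by
      rw [← Nat.cast_mul, ZMod.natCast_eq_zero_iff, pow_succ']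
      exact mul_dvd_mul_left _ hdvd
    push_cast at hmul
    rw [(cast_fib_succ_mul_of_sq_eq_zero hsq k).1, hmul, zero_mul]

lemma pow_succ_dvd_fib_pow_mul {q m : ℕ} (h : q ∣ fib m) : ∀ j, q ^ (j + 1) ∣ fib (q ^ j * m)
  | 0 => by simpa
  | j + 1 => by
    rw [show q ^ (j + 1) * m = q * (q ^ j * m) by ring]
    exact pow_succ_dvd_fib_mul j.succ_ne_zero (pow_succ_dvd_fib_pow_mul h j)

lemma cast_fib_eq_zero_of_cast_fib_add_eq {R : Type*} [AddGroupWithOne R] {d : ℕ} :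
    ∀ {i : ℕ}, (fib (i + d) : R) = fib i → (fib (i + d + 1) : R) = fib (i + 1) →
      (fib d : R) = 0
  | 0, h₀, _ => by simpa using h₀
  | i + 1, h₀, h₁ => by
    have h₀' : (fib (i + d + 1) : R) = fib (i + 1) := by rwa [add_right_comm] at h₀
    have h₁' : (fib (i + d + 2) : R) = fib (i + 2) := by
      rwa [show i + 1 + d + 1 = i + d + 2 by omega] at h₁
    rw [fib_add_two, fib_add_two, Nat.cast_add, Nat.cast_add, h₀'] at h₁'
    exact cast_fib_eq_zero_of_cast_fib_add_eq (add_right_cancel h₁') h₀'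

lemma exists_dvd_fib_lt_sq {q : ℕ} (hq : 1 < q) : ∃ k, 0 < k ∧ k < q ^ 2 ∧ q ∣ fib k := by
  have : NeZero q := ⟨by omega⟩
  let f : ℕ → ZMod q × ZMod q := fun i => (fib i, fib (i + 1))
  have hmaps : Set.MapsTo f (Finset.range (q ^ 2) : Set ℕ)
      (Finset.univ.erase (0 : ZMod q × ZMod q) : Set _) := by
    intro i _
    refine Finset.mem_coe.2 <| Finset.mem_erase.2 ⟨fun hi => hq.ne' ?_, Finset.mem_univ _⟩
    exact eq_one_of_dvd_coprimes (fib_coprime_fib_succ i)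
      ((ZMod.natCast_eq_zero_iff _ _).1 (congrArg Prod.fst hi))
      ((ZMod.natCast_eq_zero_iff _ _).1 (congrArg Prod.snd hi))
  have hcard : (Finset.univ.erase (0 : ZMod q × ZMod q)).card < (Finset.range (q ^ 2)).card := by
    rw [Finset.card_erase_of_mem (Finset.mem_univ _), Finset.card_univ, Fintype.card_prod,
      ZMod.card, Finset.card_range, sq]
    exact Nat.sub_lt (by positivity) one_pos
  obtain ⟨i, hi, j, hj, hne, hf⟩ := Finset.exists_ne_map_eq_of_card_lt_of_maps_to hcard hmaps
  wlog hij : i < j generalizing i j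
  · exact this j hj i hi hne.symm hf.symm (by omega)
  obtain ⟨d, rfl⟩ := Nat.exists_eq_add_of_lt hij
  rw [Finset.mem_range] at hj
  refine ⟨d + 1, by omega, by omega, ?_⟩
  rw [← ZMod.natCast_eq_zero_iff]
  exact cast_fib_eq_zero_of_cast_fib_add_eq (congrArg Prod.fst hf).symm (congrArg Prod.snd hf).symm

end Nat

lemma fibZ_spec {m : ℕ} (hm : 1 < m) : 0 < fibZ m ∧ m ∣ Nat.fib (fibZ m) := by
  obtain ⟨k, hk₀, -, hk⟩ := Nat.exists_dvd_fib_lt_sq hm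
  exact Nat.sInf_mem (s := {n | 0 < n ∧ m ∣ Nat.fib n}) ⟨k, hk₀, hk⟩

lemma fibZ_lt_sq {m : ℕ} (hm : 1 < m) : fibZ m < m ^ 2 := by
  obtain ⟨k, hk₀, hk_lt, hk⟩ := Nat.exists_dvd_fib_lt_sq hm
  exact (Nat.sInf_le (s := {n | 0 < n ∧ m ∣ Nat.fib n}) ⟨hk₀, hk⟩).trans_lt hk_lt

lemma padicValNat_fibZ_le_one {p : ℕ} (hp : 1 < p) : padicValNat p (fibZ p) ≤ 1 :=
  Nat.lt_succ_iff.1 <| (padicValNat_le_nat_log _).trans_lt <|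
    Nat.log_lt_of_lt_pow (fibZ_spec hp).1.ne' (fibZ_lt_sq hp)

theorem padicValNat_fib_ge_general (p : ℕ) (hp : p.Prime) (n : ℕ)
    (h : fibZ p ∣ n) : padicValNat p n ≤ padicValNat p (Nat.fib n) := by
  have := Fact.mk hp
  obtain ⟨hz, hp_dvd⟩ := fibZ_spec hp.one_lt
  obtain ⟨c, rfl⟩ := h
  rcases eq_or_ne c 0 with rfl | hc
  · simp
  have hlift : p ^ (padicValNat p c + 1) ∣ Nat.fib (fibZ p * c) :=
    (Nat.pow_succ_dvd_fib_pow_mul hp_dvd _).trans <| Nat.fib_dvd _ _ <| by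
      rw [mul_comm]; exact mul_dvd_mul_left _ pow_padicValNat_dvd
  rw [← padicValNat_dvd_iff_le (Nat.fib_pos.2 (by positivity)).ne', padicValNat.mul hz.ne' hc]
  exact (pow_dvd_pow p (by linarith [padicValNat_fibZ_le_one hp.one_lt])).trans hlift

theorem padicValNat_fib_ge (p : ℕ) (hp : p.Prime) (n : ℕ) (hn : 0 < n)
    (h : fibZ p ∣ n) : padicValNat p n ≤ padicValNat p (Nat.fib n) :=
  padicValNat_fib_ge_general p hp n h
end

section
/- Let a_1, a_2 be coprime integers with a_1·a_2 ≠ 0, and let (u_n) be the Lucas sequence defined by u_0 = 0, u_1 = 1, u_n = a_1·u_{n−1} + a_2·u_{n−2} for n ≥ 2; assume the sequence is nondegenerate, i.e., the ratio of the roots of X² − a_1·X − a_2 is not a root of unity. For a positive integer m coprime to a_2, let z_u(m) be the least positive integer n such that m divides u_n (which exists), and ℓ_u(m) := lcm(m, z_u(m)). Then for every positive integer k, the set A_{u,k} = {n ≥ 1 : gcd(n, u_n) = k} is nonempty if and only if gcd(k, a_2) = 1 and k = gcd(ℓ_u(k), |u_{ℓ_u(k)}|). -/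
open scoped BigOperators

/-- The Lucas sequence with parameters `a1`, `a2`:
`u 0 = 0`, `u 1 = 1`, `u (n+2) = a1 * u (n+1) + a2 * u n`. -/
def lucasU (a1 a2 : ℤ) : ℕ → ℤ
  | 0 => 0
  | 1 => 1
  | n + 2 => a1 * lucasU a1 a2 (n + 1) + a2 * lucasU a1 a2 n

/-- Rank of appearance of `m` in the Lucas sequence. -/
noncomputable def lucasZ (a1 a2 : ℤ) (m : ℕ) : ℕ :=
  sInf {n : ℕ | 0 < n ∧ (m : ℤ) ∣ lucasU a1 a2 n}

/-- `lucasL a1 a2 m = lcm(m, z_u(m))`. -/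
noncomputable def lucasL (a1 a2 : ℤ) (m : ℕ) : ℕ := Nat.lcm m (lucasZ a1 a2 m)

/-- The set of positive integers `n` with `gcd(n, u_n) = k`. -/
def lucasA (a1 a2 : ℤ) (k : ℕ) : Set ℕ :=
  {n : ℕ | 0 < n ∧ Int.gcd (n : ℤ) (lucasU a1 a2 n) = k}

/-- Nondegeneracy: the ratio of the roots of `X^2 - a1*X - a2` is not a root of unity. -/
def LucasNondegenerate (a1 a2 : ℤ) : Prop :=
  ∀ α β : ℂ, α + β = (a1 : ℂ) → α * β = -(a2 : ℂ) →
    ∀ n : ℕ, 0 < n → (α / β) ^ n ≠ 1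

/-!
If `m` is coprime to `a₂`, the set `{t | m ∣ u_t}` is invariant under `t ↦ t + z_u(m)` and its
inverse, by the addition formula `u_{w+n+1} = u_{w+1} u_{n+1} + a₂ u_w u_n` together with
`gcd(u_w, u_{w+1}) = 1`; hence `m ∣ u_t ↔ z_u(m) ∣ t`. If `gcd(n, u_n) = k`, then `k` is
coprime to `a₂` and both `k` and `z_u(k)` divide `n`, so `ℓ := ℓ_u(k) ∣ n`. Since `(u_n)` is
a divisibility sequence, `gcd(ℓ, u_ℓ) ∣ gcd(n, u_n) = k`, while `k ∣ ℓ` and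
`k ∣ u_{z_u(k)} ∣ u_ℓ` give the reverse divisibility. Conversely `n = ℓ_u(k)` lies in
`A_{u,k}`.
-/

section

variable {a1 a2 : ℤ}

theorem lucasU_add_two (n : ℕ) :
    lucasU a1 a2 (n + 2) = a1 * lucasU a1 a2 (n + 1) + a2 * lucasU a1 a2 n := rfl

theorem lucasU_add_succ (w n : ℕ) :
    lucasU a1 a2 (w + n + 1) =
      lucasU a1 a2 (w + 1) * lucasU a1 a2 (n + 1) + a2 * lucasU a1 a2 w * lucasU a1 a2 n := by
  induction w using Nat.twoStepInduction with
  | zero => simp [lucasU]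
  | one =>
    rw [show 1 + n + 1 = n + 2 by omega, lucasU_add_two, show 1 + 1 = 0 + 2 by rfl, lucasU_add_two]
    simp only [lucasU]
    ring
  | more w ih₁ ih₂ =>
    rw [show w + 2 + n + 1 = (w + n + 1) + 2 by omega, lucasU_add_two,
      show w + n + 1 + 1 = w + 1 + n + 1 by omega, ih₁, ih₂,
      show w + 2 + 1 = (w + 1) + 2 by rfl, lucasU_add_two (w + 1), lucasU_add_two w]
    ring

theorem lucasU_dvd_lucasU_of_dvd {m n : ℕ} (h : m ∣ n) : lucasU a1 a2 m ∣ lucasU a1 a2 n := by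
  obtain ⟨q, rfl⟩ := h
  rcases m with _ | w
  · simp [lucasU]
  induction q with
  | zero => simp [lucasU]
  | succ q ih =>
    rw [show (w + 1) * (q + 1) = w + (w + 1) * q + 1 by ring, lucasU_add_succ]
    exact dvd_add (dvd_mul_right _ _) (dvd_mul_of_dvd_right ih _)

theorem isCoprime_lucasU_succ_a2 (hco : IsCoprime a1 a2) (n : ℕ) :
    IsCoprime (lucasU a1 a2 (n + 1)) a2 := by
  induction n with
  | zero => exact isCoprime_one_left
  | succ n ih => exact (hco.mul_left ih).add_mul_left_left _

theorem isCoprime_lucasU_lucasU_succ (hco : IsCoprime a1 a2) (n : ℕ) :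
    IsCoprime (lucasU a1 a2 n) (lucasU a1 a2 (n + 1)) := by
  induction n with
  | zero => exact isCoprime_one_right
  | succ n ih =>
    rw [lucasU_add_two, add_comm (a1 * _)]
    exact (((isCoprime_lucasU_succ_a2 hco n).mul_right ih.symm).add_mul_right_right a1)

theorem dvd_lucasU_add_iff (hco : IsCoprime a1 a2) {m : ℤ} (hm : IsCoprime m a2) {z : ℕ}
    (hz : m ∣ lucasU a1 a2 z) (n : ℕ) :
    m ∣ lucasU a1 a2 (z + n) ↔ m ∣ lucasU a1 a2 n := by
  rcases z with _ | w
  · rw [zero_add]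
  have hmw : IsCoprime m (lucasU a1 a2 w) :=
    (isCoprime_lucasU_lucasU_succ hco w).symm.of_isCoprime_of_dvd_left hz
  rw [show w + 1 + n = w + n + 1 by omega, lucasU_add_succ,
    dvd_add_right (dvd_mul_of_dvd_left hz _)]
  exact ⟨(hm.mul_right hmw).dvd_of_dvd_mul_left, fun h ↦ dvd_mul_of_dvd_right h _⟩

theorem dvd_lucasU_mul_add_iff (hco : IsCoprime a1 a2) {m : ℤ} (hm : IsCoprime m a2) {z : ℕ}
    (hz : m ∣ lucasU a1 a2 z) (q r : ℕ) :
    m ∣ lucasU a1 a2 (z * q + r) ↔ m ∣ lucasU a1 a2 r := by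
  induction q with
  | zero => rw [mul_zero, zero_add]
  | succ q ih =>
    rw [show z * (q + 1) + r = z + (z * q + r) by ring, dvd_lucasU_add_iff hco hm hz, ih]

theorem lucasZ_pos_and_dvd {m n : ℕ} (hn : 0 < n) (hmn : (m : ℤ) ∣ lucasU a1 a2 n) :
    0 < lucasZ a1 a2 m ∧ (m : ℤ) ∣ lucasU a1 a2 (lucasZ a1 a2 m) :=
  Nat.sInf_mem (s := {n | 0 < n ∧ (m : ℤ) ∣ lucasU a1 a2 n}) ⟨n, hn, hmn⟩

theorem lucasZ_dvd_of_dvd_lucasU (hco : IsCoprime a1 a2) {m n : ℕ} (hm : IsCoprime (m : ℤ) a2)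
    (hn : 0 < n) (hmn : (m : ℤ) ∣ lucasU a1 a2 n) : lucasZ a1 a2 m ∣ n := by
  obtain ⟨hzpos, hz⟩ := lucasZ_pos_and_dvd hn hmn
  have hmod : (m : ℤ) ∣ lucasU a1 a2 (n % lucasZ a1 a2 m) := by
    rwa [← dvd_lucasU_mul_add_iff hco hm hz, Nat.div_add_mod]
  refine Nat.dvd_of_mod_eq_zero (Nat.eq_zero_of_not_pos fun hpos ↦ ?_)
  exact (Nat.mod_lt n hzpos).not_ge (Nat.sInf_le ⟨hpos, hmod⟩)

theorem gcd_self_lucasU_dvd_of_dvd {m n : ℕ} (h : m ∣ n) :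
    Int.gcd m (lucasU a1 a2 m) ∣ Int.gcd n (lucasU a1 a2 n) :=
  Int.dvd_gcd ((Int.gcd_dvd_left _ _).trans (Int.natCast_dvd_natCast.mpr h))
    ((Int.gcd_dvd_right _ _).trans (lucasU_dvd_lucasU_of_dvd h))

end

theorem lucasA_nonempty_iff_general (a1 a2 : ℤ) (hco : IsCoprime a1 a2) (k : ℕ) (hk : 0 < k) :
    (lucasA a1 a2 k).Nonempty ↔
      (Int.gcd (k : ℤ) a2 = 1 ∧
        k = Int.gcd (lucasL a1 a2 k : ℤ) (lucasU a1 a2 (lucasL a1 a2 k))) := by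
  constructor
  · rintro ⟨n, hn, rfl⟩
    set k := Int.gcd (n : ℤ) (lucasU a1 a2 n)
    have hkn : k ∣ n := Int.natCast_dvd_natCast.mp (Int.gcd_dvd_left _ _)
    have hkun : (k : ℤ) ∣ lucasU a1 a2 n := Int.gcd_dvd_right _ _
    obtain ⟨n', rfl⟩ := Nat.exists_eq_add_one_of_ne_zero hn.ne'
    have hka2 : IsCoprime (k : ℤ) a2 :=
      (isCoprime_lucasU_succ_a2 hco n').of_isCoprime_of_dvd_left hkun
    have hzk : lucasZ a1 a2 k ∣ lucasL a1 a2 k := Nat.dvd_lcm_right _ _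
    have hkul : (k : ℤ) ∣ lucasU a1 a2 (lucasL a1 a2 k) :=
      (lucasZ_pos_and_dvd hn hkun).2.trans (lucasU_dvd_lucasU_of_dvd hzk)
    have hln : lucasL a1 a2 k ∣ n' + 1 :=
      Nat.lcm_dvd hkn (lucasZ_dvd_of_dvd_lucasU hco hka2 hn hkun)
    refine ⟨Int.isCoprime_iff_gcd_eq_one.mp hka2,
      Nat.dvd_antisymm ?_ (gcd_self_lucasU_dvd_of_dvd hln)⟩
    exact Int.dvd_gcd (Int.natCast_dvd_natCast.mpr (Nat.dvd_lcm_left _ _)) hkul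
  · rintro ⟨-, hkl⟩
    refine ⟨lucasL a1 a2 k, Nat.pos_of_ne_zero fun h0 ↦ ?_, hkl.symm⟩
    exact hk.ne' (by simpa [h0, lucasU] using hkl)

theorem lucasA_nonempty_iff (a1 a2 : ℤ) (hco : IsCoprime a1 a2) (hne : a1 * a2 ≠ 0)
    (hnd : LucasNondegenerate a1 a2) (k : ℕ) (hk : 0 < k) :
    (lucasA a1 a2 k).Nonempty ↔
      (Int.gcd (k : ℤ) a2 = 1 ∧
        k = Int.gcd (lucasL a1 a2 k : ℤ) (lucasU a1 a2 (lucasL a1 a2 k))) :=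
  lucasA_nonempty_iff_general a1 a2 hco k hk
end
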